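/- Let X = {x, y, z} and U = {u, v, w} be the bases of two distinct 3-maximal submonoids of Σ*, and let g, h : A* → Σ* be the morphisms with g(𝐚) = x, g(𝐛) = y, g(𝐜) = z and h(𝐚) = u, h(𝐛) = v, h(𝐜) = w, and assume g is marked. Let (r, s) and (r', s') be two distinct minimal solutions, let 𝐮 be the longest common prefix of r and r', and let 𝐯 be the longest common prefix of s and s'. Then: (1) h(𝐯) is a prefix of g(𝐮), so there is a word o with g(𝐮) = h(𝐯)·o; (2) if 𝐮 = ε then 𝐯 = ε; and (3) writing r = 𝐮𝐮₁, r' = 𝐮𝐮₂, s = 𝐯𝐯₁, s' = 𝐯𝐯₂, the words 𝐮₁, 𝐮₂, 𝐯₁, 𝐯₂ are nonempty, the first letters of 𝐮₁ and 𝐮₂ differ, and the first letters of 𝐯₁ and 𝐯₂ differ (i.e., o is a critical overflow on (𝐮, 𝐯)). -/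

import Mathlib

/-- The basis of a submonoid `M` of the free monoid `Σ*`: `(M \ {ε}) \ (M \ {ε})²`. -/
def basisOf {α : Type*} (M : Submonoid (FreeMonoid α)) : Set (FreeMonoid α) :=
  ((M : Set (FreeMonoid α)) \ {1}) \
    {w | ∃ u ∈ (M : Set (FreeMonoid α)) \ {1}, ∃ v ∈ (M : Set (FreeMonoid α)) \ {1}, w = u * v}

/-- A submonoid of `Σ*` is `k`-maximal if its rank (cardinality of its basis) is at most `k`
and it is maximal (w.r.t. inclusion) among submonoids of rank at most `k`. -/
def IsKMaximal {α : Type*} (k : ℕ) (M : Submonoid (FreeMonoid α)) : Prop :=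
  (basisOf M).Finite ∧ (basisOf M).ncard ≤ k ∧
    ∀ M' : Submonoid (FreeMonoid α),
      (basisOf M').Finite → (basisOf M').ncard ≤ k → M ≤ M' → M = M'

/-- A solution of the pair of morphisms `(g, h)`: a pair `(r, s)` of nonempty words
over the three-letter alphabet with `g r = h s` (an element of the coincidence set). -/
def IsSolution {α : Type*} (g h : FreeMonoid (Fin 3) →* FreeMonoid α)
    (p : FreeMonoid (Fin 3) × FreeMonoid (Fin 3)) : Prop :=
  p.1 ≠ 1 ∧ p.2 ≠ 1 ∧ g p.1 = h p.2

/-- `(p.1, p.2) < (q.1, q.2)`: componentwise proper prefix of pairs of words. -/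
def PairLt (p q : FreeMonoid (Fin 3) × FreeMonoid (Fin 3)) : Prop :=
  (∃ z : FreeMonoid (Fin 3), z ≠ 1 ∧ q.1 = p.1 * z) ∧
  (∃ z : FreeMonoid (Fin 3), z ≠ 1 ∧ q.2 = p.2 * z)

/-- A minimal solution: a solution having no proper (pairwise) prefix which is a solution. -/
def IsMinimalSolution {α : Type*} (g h : FreeMonoid (Fin 3) →* FreeMonoid α)
    (p : FreeMonoid (Fin 3) × FreeMonoid (Fin 3)) : Prop :=
  IsSolution g h p ∧ ∀ q, PairLt q p → ¬ IsSolution g h q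

/-- A morphism is marked if the images of distinct letters are nonempty words
beginning with distinct letters. -/
def Marked {α : Type*} (g : FreeMonoid (Fin 3) →* FreeMonoid α) : Prop :=
  (∀ i : Fin 3, g (FreeMonoid.of i) ≠ 1) ∧
    ∀ i j : Fin 3, i ≠ j →
      (FreeMonoid.toList (g (FreeMonoid.of i))).head? ≠
        (FreeMonoid.toList (g (FreeMonoid.of j))).head?

/-!
`g` is a prefix morphism because it is marked, and so is `h`: a basis element of a 3-maximal
submonoid cannot be a proper prefix of another one. Prefix morphisms reflect the prefix order, so
for two solutions `r` is a prefix of `r'` iff `s` is a prefix of `s'`, and by minimality this never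
happens for two distinct minimal solutions. Hence the remainders after the longest common prefixes
are nonempty and begin with different letters. As `g` is marked, `g u₁` and `g u₂` then begin with
different letters too, so `h V`, a common prefix of `g U * g u₁` and `g U * g u₂`, is a prefix
of `g U`.

In `FreeMonoid`, `a ∣ b` means `b = a * c`: divisibility is the prefix order.
-/

open Submonoid

namespace FreeMonoid

variable {α : Type*} {p q m X Y₁ Y₂ : FreeMonoid α}

theorem dvd_iff_isPrefix : p ∣ q ↔ p.toList <+: q.toList := by
  constructor
  · rintro ⟨t, rfl⟩
    exact ⟨t.toList, rfl⟩
  · rintro ⟨l, hl⟩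
    exact ⟨ofList l, toList.injective hl.symm⟩

theorem dvd_or_dvd_of_dvd_of_dvd (hp : p ∣ m) (hq : q ∣ m) : p ∣ q ∨ q ∣ p := by
  simpa only [dvd_iff_isPrefix] using
    List.prefix_or_prefix_of_prefix (dvd_iff_isPrefix.1 hp) (dvd_iff_isPrefix.1 hq)

theorem eq_one_of_dvd_one (hp : p ∣ 1) : p = 1 :=
  let ⟨_, hc⟩ := hp
  eq_one_of_mul_right' hc.symm

theorem dvd_antisymm (hpq : p ∣ q) (hqp : q ∣ p) : p = q := by
  obtain ⟨t, rfl⟩ := hpq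
  obtain ⟨t', ht'⟩ := hqp
  have htt' : t * t' = 1 := mul_left_cancel (a := p) (by rw [mul_one, ← mul_assoc]; exact ht'.symm)
  rw [eq_one_of_mul_right' htt', mul_one]

theorem dvd_of_mul_dvd_mul_left (hpq : X * p ∣ X * q) : p ∣ q :=
  let ⟨c, hc⟩ := hpq
  ⟨c, mul_left_cancel (hc.trans (mul_assoc X p c))⟩

theorem exists_eq_of_mul_of_ne_one (hp : p ≠ 1) : ∃ a p', p = of a * p' := by
  cases p using FreeMonoid.casesOn with
  | one => exact absurd rfl hp
  | of_mul a p' => exact ⟨a, p', rfl⟩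

theorem head?_toList_of_dvd (hpq : p ∣ q) (hp : p ≠ 1) : q.toList.head? = p.toList.head? := by
  obtain ⟨t, rfl⟩ := hpq
  obtain ⟨a, p', rfl⟩ := exists_eq_of_mul_of_ne_one hp
  rfl

theorem head?_toList_ne_none (hp : p ≠ 1) : p.toList.head? ≠ none := by
  obtain ⟨a, p', rfl⟩ := exists_eq_of_mul_of_ne_one hp
  simp

theorem dvd_of_dvd_mul_of_dvd_mul (hY : Y₁.toList.head? ≠ Y₂.toList.head?)
    (h₁ : m ∣ X * Y₁) (h₂ : m ∣ X * Y₂) : m ∣ X := by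
  rcases dvd_or_dvd_of_dvd_of_dvd h₁ (dvd_mul_right X Y₁) with hmX | ⟨n, rfl⟩
  · exact hmX
  by_cases hn : n = 1
  · rw [hn, mul_one]
  · exact absurd ((head?_toList_of_dvd (dvd_of_mul_dvd_mul_left h₁) hn).trans
      (head?_toList_of_dvd (dvd_of_mul_dvd_mul_left h₂) hn).symm) hY

theorem head?_toList_ne_of_forall_dvd {U u₁ u₂ : FreeMonoid α}
    (hU : ∀ W, W ∣ U * u₁ → W ∣ U * u₂ → W ∣ U) (hu₁ : u₁ ≠ 1) :
    u₁.toList.head? ≠ u₂.toList.head? := by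
  obtain ⟨a, u₁, rfl⟩ := exists_eq_of_mul_of_ne_one hu₁
  intro hhead
  have hu₂ : u₂ ≠ 1 := by
    rintro rfl
    exact head?_toList_ne_none hu₁ hhead
  obtain ⟨b, u₂, rfl⟩ := exists_eq_of_mul_of_ne_one hu₂
  obtain rfl : a = b := by simpa using hhead
  have hdvd : U * of a ∣ U := hU _ (by rw [← mul_assoc]; exact dvd_mul_right _ _)
    (by rw [← mul_assoc]; exact dvd_mul_right _ _)
  exact of_ne_one a (mul_eq_left.1 (dvd_antisymm hdvd (dvd_mul_right _ _)))

theorem ne_one_and_head?_ne_of_forall_dvd {U u₁ u₂ : FreeMonoid α}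
    (hU : ∀ W, W ∣ U * u₁ → W ∣ U * u₂ → W ∣ U) (h₁₂ : ¬ U * u₁ ∣ U * u₂)
    (h₂₁ : ¬ U * u₂ ∣ U * u₁) :
    u₁ ≠ 1 ∧ u₂ ≠ 1 ∧ u₁.toList.head? ≠ u₂.toList.head? := by
  have hu₁ : u₁ ≠ 1 := by
    rintro rfl
    rw [mul_one] at h₁₂
    exact h₁₂ (dvd_mul_right U u₂)
  have hu₂ : u₂ ≠ 1 := by
    rintro rfl
    rw [mul_one] at h₂₁
    exact h₂₁ (dvd_mul_right U u₁)
  exact ⟨hu₁, hu₂, head?_toList_ne_of_forall_dvd hU hu₁⟩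

end FreeMonoid

section

variable {α β : Type*}

theorem basisOf_closure_subset (S : Set (FreeMonoid α)) : basisOf (closure S) ⊆ S := by
  rintro m ⟨⟨hm, hm1⟩, hirr⟩
  induction hm using Submonoid.closure_induction with
  | mem x hx => exact hx
  | one => exact absurd rfl hm1
  | mul x y hx hy ihx ihy =>
    by_cases hx1 : x = 1
    · subst hx1
      simp only [one_mul] at hm1 hirr ⊢
      exact ihy hirr hm1
    by_cases hy1 : y = 1
    · subst hy1
      simp only [mul_one] at hm1 hirr ⊢
      exact ihx hirr hm1
    exact absurd ⟨x, ⟨hx, hx1⟩, y, ⟨hy, hy1⟩, rfl⟩ hirr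

/-- Replacing `p * t` by `t` in the basis would give a submonoid of rank at most `k` containing
`closure S`, in which `p * t` is no longer a basis element. -/
theorem IsKMaximal.mul_notMem {k : ℕ} {S : Set (FreeMonoid α)} (hmax : IsKMaximal k (closure S))
    (hS : basisOf (closure S) = S) {p t : FreeMonoid α} (hp : p ∈ S) (ht : t ≠ 1) :
    p * t ∉ S := by
  intro hpt
  have hp1 : p ≠ 1 := (by rwa [hS] : p ∈ basisOf (closure S)).1.2
  have hptp : p * t ≠ p := fun e => ht (mul_eq_left.1 e)
  set S' := insert t (S \ {p * t})
  have hle : closure S ≤ closure S' := closure_le.2 fun x hx => by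
    by_cases hx' : x = p * t
    · rw [hx']
      exact mul_mem (subset_closure (Set.mem_insert_of_mem _ ⟨hp, hptp.symm⟩))
        (subset_closure (Set.mem_insert _ _))
    · exact subset_closure (Set.mem_insert_of_mem _ ⟨hx, hx'⟩)
  have hSfin : S.Finite := hS ▸ hmax.1
  have hS'fin : S'.Finite := hSfin.sdiff.insert t
  have hsub := basisOf_closure_subset S'
  have hcard : (basisOf (closure S')).ncard ≤ k := calc
    _ ≤ S'.ncard := Set.ncard_le_ncard hsub hS'fin
    _ ≤ (S \ {p * t}).ncard + 1 := Set.ncard_insert_le _ _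
    _ = S.ncard := Set.ncard_sdiff_singleton_add_one hpt hSfin
    _ ≤ k := hS ▸ hmax.2.1
  have hmem : p * t ∈ S' := by
    rw [← hmax.2.2 _ (hS'fin.subset hsub) hcard hle] at hsub
    exact hsub (hS.symm ▸ hpt)
  rcases hmem with hpt' | ⟨-, hpt'⟩
  · exact hp1 (mul_eq_right.1 hpt')
  · exact hpt' rfl

/-- The images of the letters form a prefix code, listed without repetition. -/
def IsPrefixMorphism (f : FreeMonoid β →* FreeMonoid α) : Prop :=
  (∀ b, f (FreeMonoid.of b) ≠ 1) ∧ ∀ b c, f (FreeMonoid.of b) ∣ f (FreeMonoid.of c) → b = c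

namespace IsPrefixMorphism

variable {f : FreeMonoid β →* FreeMonoid α}

theorem dvd_of_map_dvd (hf : IsPrefixMorphism f) {p q : FreeMonoid β} (hpq : f p ∣ f q) :
    p ∣ q := by
  induction p using FreeMonoid.inductionOn' generalizing q with
  | one => exact one_dvd q
  | of_mul b p ih =>
    rw [map_mul] at hpq
    have hb : f (FreeMonoid.of b) ∣ f q := (dvd_mul_right _ _).trans hpq
    cases q using FreeMonoid.casesOn with
    | one => exact absurd (FreeMonoid.eq_one_of_dvd_one (map_one f ▸ hb)) (hf.1 b)
    | of_mul c q =>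
      rw [map_mul] at hb hpq
      obtain rfl : b = c := by
        rcases FreeMonoid.dvd_or_dvd_of_dvd_of_dvd hb (dvd_mul_right _ (f q)) with hbc | hcb
        · exact hf.2 b c hbc
        · exact (hf.2 c b hcb).symm
      exact mul_dvd_mul_left _ (ih (FreeMonoid.dvd_of_mul_dvd_mul_left hpq))

theorem injective (hf : IsPrefixMorphism f) : Function.Injective f := fun _ _ hpq =>
  FreeMonoid.dvd_antisymm (hf.dvd_of_map_dvd (dvd_of_eq hpq))
    (hf.dvd_of_map_dvd (dvd_of_eq hpq.symm))

theorem eq_one_of_map_eq_one (hf : IsPrefixMorphism f) {p : FreeMonoid β} (hp : f p = 1) :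
    p = 1 :=
  hf.injective (hp.trans (map_one f).symm)

theorem of_isKMaximal {k : ℕ} {S : Set (FreeMonoid α)} (hmax : IsKMaximal k (closure S))
    (hS : basisOf (closure S) = S) (hfS : ∀ b, f (FreeMonoid.of b) ∈ S)
    (hinj : Function.Injective fun b => f (FreeMonoid.of b)) : IsPrefixMorphism f := by
  refine ⟨fun b => (by rw [hS]; exact hfS b : _ ∈ basisOf (closure S)).1.2, fun b c ⟨t, ht⟩ => ?_⟩
  by_cases ht1 : t = 1
  · exact hinj (show f (FreeMonoid.of b) = f (FreeMonoid.of c) by rw [ht, ht1, mul_one])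
  · exact absurd (ht ▸ hfS c) (hmax.mul_notMem hS (hfS b) ht1)

end IsPrefixMorphism

end

namespace Marked

variable {α : Type*} {g : FreeMonoid (Fin 3) →* FreeMonoid α}

theorem isPrefixMorphism (hg : Marked g) : IsPrefixMorphism g :=
  ⟨hg.1, fun b c hbc => by_contra fun hne =>
    hg.2 b c hne (FreeMonoid.head?_toList_of_dvd hbc (hg.1 b)).symm⟩

theorem head?_toList_map_ne (hg : Marked g) {u₁ u₂ : FreeMonoid (Fin 3)} (hu₁ : u₁ ≠ 1)
    (hu : u₁.toList.head? ≠ u₂.toList.head?) :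
    (g u₁).toList.head? ≠ (g u₂).toList.head? := by
  have head_map_of_mul (a : Fin 3) (w : FreeMonoid (Fin 3)) :
      (g (FreeMonoid.of a * w)).toList.head? = (g (FreeMonoid.of a)).toList.head? :=
    FreeMonoid.head?_toList_of_dvd (by rw [map_mul]; exact dvd_mul_right _ _) (hg.1 a)
  obtain ⟨a, u₁, rfl⟩ := FreeMonoid.exists_eq_of_mul_of_ne_one hu₁
  rw [head_map_of_mul]
  cases u₂ using FreeMonoid.casesOn with
  | one => rw [map_one]; exact FreeMonoid.head?_toList_ne_none (hg.1 a)
  | of_mul b u₂ =>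
    rw [head_map_of_mul]
    exact hg.2 a b fun hab => hu (by rw [hab]; rfl)

end Marked

section Solutions

variable {α : Type*} {g h : FreeMonoid (Fin 3) →* FreeMonoid α}
  {r s r' s' : FreeMonoid (Fin 3)}

theorem IsSolution.dvd_fst_iff_dvd_snd (hg : IsPrefixMorphism g) (hh : IsPrefixMorphism h)
    (hrs : IsSolution g h (r, s)) (hrs' : IsSolution g h (r', s')) : r ∣ r' ↔ s ∣ s' := by
  constructor
  · intro hr
    exact hh.dvd_of_map_dvd (hrs.2.2 ▸ hrs'.2.2 ▸ map_dvd g hr)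
  · intro hs
    exact hg.dvd_of_map_dvd (hrs.2.2 ▸ hrs'.2.2 ▸ map_dvd h hs)

/-- The two components of a prefix solution are proper simultaneously because `g` and `h` are
nonerasing. -/
theorem IsMinimalSolution.eq_of_dvd (hg : IsPrefixMorphism g) (hh : IsPrefixMorphism h)
    (hrs' : IsMinimalSolution g h (r', s')) (hrs : IsSolution g h (r, s)) (hr : r ∣ r')
    (hs : s ∣ s') : (r, s) = (r', s') := by
  obtain ⟨a, rfl⟩ := hr
  obtain ⟨b, rfl⟩ := hs
  have hab : g a = h b := mul_left_cancel (a := g r) (by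
    rw [← map_mul, hrs'.1.2.2, map_mul, hrs.2.2])
  by_cases ha : a = 1
  · rw [ha, map_one] at hab
    rw [ha, hh.eq_one_of_map_eq_one hab.symm, mul_one, mul_one]
  · have hb : b ≠ 1 := fun hb => ha (hg.eq_one_of_map_eq_one (by rw [hab, hb, map_one]))
    exact absurd hrs (hrs'.2 (r, s) ⟨⟨a, ha, rfl⟩, ⟨b, hb, rfl⟩⟩)

theorem IsMinimalSolution.not_dvd_snd (hg : IsPrefixMorphism g) (hh : IsPrefixMorphism h)
    (hrs : IsMinimalSolution g h (r, s)) (hrs' : IsMinimalSolution g h (r', s'))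
    (hne : (r, s) ≠ (r', s')) : ¬ s ∣ s' := fun hs =>
  hne (hrs'.eq_of_dvd hg hh hrs.1 ((hrs.1.dvd_fst_iff_dvd_snd hg hh hrs'.1).2 hs) hs)

end Solutions

theorem critical_overflow_of_two_minimal_solutions_general {α : Type*}
    (u v w : FreeMonoid α)
    (hUcard : ({u, v, w} : Set (FreeMonoid α)).ncard = 3)
    (hUbasis : basisOf (Submonoid.closure {u, v, w}) = {u, v, w})
    (hUmax : IsKMaximal 3 (Submonoid.closure ({u, v, w} : Set (FreeMonoid α))))
    (g h : FreeMonoid (Fin 3) →* FreeMonoid α)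
    (hha : h (FreeMonoid.of 0) = u) (hhb : h (FreeMonoid.of 1) = v)
    (hhc : h (FreeMonoid.of 2) = w)
    (hm : Marked g)
    (r s r' s' : FreeMonoid (Fin 3))
    (hrs : IsMinimalSolution g h (r, s)) (hrs' : IsMinimalSolution g h (r', s'))
    (hne : (r, s) ≠ (r', s'))
    -- `U` is the longest common prefix of `r` and `r'`:
    (U : FreeMonoid (Fin 3))
    (hU1 : ∃ t, r = U * t) (hU2 : ∃ t, r' = U * t)
    (hUmaxpref : ∀ W : FreeMonoid (Fin 3), (∃ t, r = W * t) → (∃ t, r' = W * t) → ∃ t, U = W * t)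
    -- `V` is the longest common prefix of `s` and `s'`:
    (V : FreeMonoid (Fin 3))
    (hV1 : ∃ t, s = V * t) (hV2 : ∃ t, s' = V * t)
    (hVmaxpref : ∀ W : FreeMonoid (Fin 3), (∃ t, s = W * t) → (∃ t, s' = W * t) → ∃ t, V = W * t) :
    (∃ o : FreeMonoid α, g U = h V * o) ∧
    (U = 1 → V = 1) ∧
    (∀ u₁ u₂ v₁ v₂ : FreeMonoid (Fin 3),
      r = U * u₁ → r' = U * u₂ → s = V * v₁ → s' = V * v₂ →
        u₁ ≠ 1 ∧ u₂ ≠ 1 ∧ v₁ ≠ 1 ∧ v₂ ≠ 1 ∧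
        (FreeMonoid.toList u₁).head? ≠ (FreeMonoid.toList u₂).head? ∧
        (FreeMonoid.toList v₁).head? ≠ (FreeMonoid.toList v₂).head?) := by
  have hg : IsPrefixMorphism g := hm.isPrefixMorphism
  have hrange : Set.range (fun i => h (FreeMonoid.of i)) = {u, v, w} := by
    ext m
    simp [Fin.exists_fin_succ, hha, hhb, hhc, eq_comm]
  have hh : IsPrefixMorphism h := .of_isKMaximal hUmax hUbasis
    (fun i => hrange ▸ Set.mem_range_self i)
    (Set.injOn_univ.1 (Set.injOn_of_ncard_image_eq (by
      rw [Set.image_univ, hrange, hUcard, Set.ncard_univ, Nat.card_fin])))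
  have hs : ¬ s ∣ s' := hrs.not_dvd_snd hg hh hrs' hne
  have hs' : ¬ s' ∣ s := hrs'.not_dvd_snd hg hh hrs hne.symm
  have hr : ¬ r ∣ r' := mt (hrs.1.dvd_fst_iff_dvd_snd hg hh hrs'.1).1 hs
  have hr' : ¬ r' ∣ r := mt (hrs'.1.dvd_fst_iff_dvd_snd hg hh hrs.1).1 hs'
  obtain ⟨u₁, rfl⟩ := hU1
  obtain ⟨u₂, rfl⟩ := hU2
  obtain ⟨v₁, rfl⟩ := hV1
  obtain ⟨v₂, rfl⟩ := hV2
  obtain ⟨hu₁, hu₂, hu⟩ := FreeMonoid.ne_one_and_head?_ne_of_forall_dvd hUmaxpref hr hr'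
  obtain ⟨hv₁, hv₂, hv⟩ := FreeMonoid.ne_one_and_head?_ne_of_forall_dvd hVmaxpref hs hs'
  have hVU : h V ∣ g U := by
    refine FreeMonoid.dvd_of_dvd_mul_of_dvd_mul (hm.head?_toList_map_ne hu₁ hu) ?_ ?_
    · rw [← map_mul, hrs.1.2.2]
      exact map_dvd h (dvd_mul_right V v₁)
    · rw [← map_mul, hrs'.1.2.2]
      exact map_dvd h (dvd_mul_right V v₂)
  refine ⟨hVU, fun hU => hh.eq_one_of_map_eq_one (FreeMonoid.eq_one_of_dvd_one ?_), ?_⟩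
  · rwa [hU, map_one] at hVU
  · rintro _ _ _ _ h₁ h₂ h₃ h₄
    simp only [mul_right_inj] at h₁ h₂ h₃ h₄
    subst h₁ h₂ h₃ h₄
    exact ⟨hu₁, hu₂, hv₁, hv₂, hu, hv⟩

/-- Two distinct minimal solutions produce a critical overflow on the pair of longest
common prefixes of their components. -/
theorem critical_overflow_of_two_minimal_solutions {α : Type*}
    (x y z u v w : FreeMonoid α)
    (hXcard : ({x, y, z} : Set (FreeMonoid α)).ncard = 3)
    (hUcard : ({u, v, w} : Set (FreeMonoid α)).ncard = 3)
    (hXU : ({x, y, z} : Set (FreeMonoid α)) ≠ {u, v, w})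
    (hXbasis : basisOf (Submonoid.closure {x, y, z}) = {x, y, z})
    (hUbasis : basisOf (Submonoid.closure {u, v, w}) = {u, v, w})
    (hXmax : IsKMaximal 3 (Submonoid.closure ({x, y, z} : Set (FreeMonoid α))))
    (hUmax : IsKMaximal 3 (Submonoid.closure ({u, v, w} : Set (FreeMonoid α))))
    (g h : FreeMonoid (Fin 3) →* FreeMonoid α)
    (hga : g (FreeMonoid.of 0) = x) (hgb : g (FreeMonoid.of 1) = y)
    (hgc : g (FreeMonoid.of 2) = z)
    (hha : h (FreeMonoid.of 0) = u) (hhb : h (FreeMonoid.of 1) = v)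
    (hhc : h (FreeMonoid.of 2) = w)
    (hm : Marked g)
    (r s r' s' : FreeMonoid (Fin 3))
    (hrs : IsMinimalSolution g h (r, s)) (hrs' : IsMinimalSolution g h (r', s'))
    (hne : (r, s) ≠ (r', s'))
    -- `U` is the longest common prefix of `r` and `r'`:
    (U : FreeMonoid (Fin 3))
    (hU1 : ∃ t, r = U * t) (hU2 : ∃ t, r' = U * t)
    (hUmaxpref : ∀ W : FreeMonoid (Fin 3), (∃ t, r = W * t) → (∃ t, r' = W * t) → ∃ t, U = W * t)
    -- `V` is the longest common prefix of `s` and `s'`: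
    (V : FreeMonoid (Fin 3))
    (hV1 : ∃ t, s = V * t) (hV2 : ∃ t, s' = V * t)
    (hVmaxpref : ∀ W : FreeMonoid (Fin 3), (∃ t, s = W * t) → (∃ t, s' = W * t) → ∃ t, V = W * t) :
    (∃ o : FreeMonoid α, g U = h V * o) ∧
    (U = 1 → V = 1) ∧
    (∀ u₁ u₂ v₁ v₂ : FreeMonoid (Fin 3),
      r = U * u₁ → r' = U * u₂ → s = V * v₁ → s' = V * v₂ →
        u₁ ≠ 1 ∧ u₂ ≠ 1 ∧ v₁ ≠ 1 ∧ v₂ ≠ 1 ∧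
        (FreeMonoid.toList u₁).head? ≠ (FreeMonoid.toList u₂).head? ∧
        (FreeMonoid.toList v₁).head? ≠ (FreeMonoid.toList v₂).head?) :=
  critical_overflow_of_two_minimal_solutions_general u v w hUcard hUbasis hUmax g h hha hhb hhc hm r
    s r' s' hrs hrs' hne U hU1 hU2 hUmaxpref V hV1 hV2 hVmaxpref
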